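/- Let P be a finite poset with n elements and let (x_1, x_2, …, x_n) be any linear extension of P. Then chain polytope rowmotion satisfies Row_C = τ_{x_n} ∘ ⋯ ∘ τ_{x_2} ∘ τ_{x_1} (compositions applied right to left, so τ_{x_1} is applied first), where Row_C = OP^{-1} ∘ comp ∘ OR : C(P) → C(P). -/

import Mathlib

/-!
Write `f = 1 - OR g` and `h = OP⁻¹ f = Row_C g`. Since `OP ∘ OP⁻¹ = id`, the largest sum of `h`
along a saturated chain from a minimal element up to `x` is `f x`. Toggle along the linear
extension: just before `τ_e` is applied, the labels are those of `h` strictly below `e` (these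
elements come earlier) and those of `g` at and above `e`. A maximal chain through `e` splits at
`e` into a chain up to `e` and a chain from `e` upwards, so its largest sum is
`(f e - h e) + OR g e = 1 - h e`, and `τ_e` replaces the label of `e` by `h e`.
-/

open scoped Classical

variable {P : Type*} [PartialOrder P]

/-- Membership in the chain polytope `C(P)`: nonnegative labels whose sum along every
chain is at most 1. -/
def InChainPolytope (P : Type*) [PartialOrder P] (g : P → ℝ) : Prop :=
  (∀ x : P, 0 ≤ g x) ∧ ∀ l : List P, l.Chain' (· < ·) → (l.map g).sum ≤ 1

/-- Membership in the order-reversing polytope `OR(P)`. -/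
def InORPolytope (P : Type*) [PartialOrder P] (f : P → ℝ) : Prop :=
  (∀ x : P, 0 ≤ f x ∧ f x ≤ 1) ∧ ∀ ⦃x y : P⦄, x ≤ y → f y ≤ f x

/-- Membership in the order-preserving polytope `OP(P)`. -/
def InOPPolytope (P : Type*) [PartialOrder P] (f : P → ℝ) : Prop :=
  (∀ x : P, 0 ≤ f x ∧ f x ≤ 1) ∧ ∀ ⦃x y : P⦄, x ≤ y → f x ≤ f y

/-- The poset `P̂`, obtained from `P` by adjoining a minimum `m̂ = ⊥` and a
maximum `M̂ = ⊤`. -/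
abbrev PHat (P : Type*) := WithBot (WithTop P)

/-- The inclusion of `P` into `P̂`. -/
def toHat (x : P) : PHat P := ((x : WithTop P) : PHat P)

/-- Extension of an order-reversing labeling to `P̂`, with `f(m̂) = 1`, `f(M̂) = 0`. -/
noncomputable def hatOR (f : P → ℝ) : PHat P → ℝ := fun y =>
  WithBot.recBotCoe 1 (fun w => WithTop.recTopCoe 0 f w) y

/-- Extension of an order-preserving labeling to `P̂`, with `f(m̂) = 0`, `f(M̂) = 1`. -/
noncomputable def hatOP (f : P → ℝ) : PHat P → ℝ := fun y =>
  WithBot.recBotCoe 0 (fun w => WithTop.recTopCoe 1 f w) y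

/-- The saturated chains `x = y_1 ⋖ y_2 ⋖ ⋯ ⋖ y_k` from `x` up to a maximal element. -/
def maxChainsFrom (x : P) : Set (List P) :=
  {l | l.Chain' (· ⋖ ·) ∧ l.head? = some x ∧ ∃ z, l.getLast? = some z ∧ IsMax z}

/-- The saturated chains `y_1 ⋖ ⋯ ⋖ y_k = x` from a minimal element up to `x`. -/
def maxChainsTo (x : P) : Set (List P) :=
  {l | l.Chain' (· ⋖ ·) ∧ (∃ a, l.head? = some a ∧ IsMin a) ∧ l.getLast? = some x}

/-- The maximal chains of `P` containing `e`. -/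
def maxChainsThru (e : P) : Set (List P) :=
  {l | l.Chain' (· ⋖ ·) ∧ (∃ a, l.head? = some a ∧ IsMin a) ∧
    (∃ z, l.getLast? = some z ∧ IsMax z) ∧ e ∈ l}

/-- The transfer map `OR : C(P) → OR(P)`:
`(OR g)(x) = max{ g(y_1) + ⋯ + g(y_k) | x = y_1 ⋖ ⋯ ⋖ y_k, y_k maximal }`. -/
noncomputable def ORmap (g : P → ℝ) (x : P) : ℝ :=
  sSup ((fun l => (l.map g).sum) '' maxChainsFrom x)

/-- The transfer map `OP : C(P) → OP(P)`:
`(OP g)(x) = max{ g(y_1) + ⋯ + g(y_k) | y_1 ⋖ ⋯ ⋖ y_k = x, y_1 minimal }`. -/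
noncomputable def OPmap (g : P → ℝ) (x : P) : ℝ :=
  sSup ((fun l => (l.map g).sum) '' maxChainsTo x)

/-- The inverse transfer map: `(OR⁻¹ f)(x) = f(x) - max{ f(y) | y ⋗ x in P̂ }`. -/
noncomputable def ORinv (f : P → ℝ) (x : P) : ℝ :=
  f x - sSup {v : ℝ | ∃ y : PHat P, toHat x ⋖ y ∧ v = hatOR f y}

/-- The inverse transfer map: `(OP⁻¹ f)(x) = f(x) - max{ f(y) | y ⋖ x in P̂ }`. -/
noncomputable def OPinv (f : P → ℝ) (x : P) : ℝ :=
  f x - sSup {v : ℝ | ∃ y : PHat P, y ⋖ toHat x ∧ v = hatOP f y}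

/-- The piecewise-linear order ideal toggle on the order-reversing polytope:
the label of `e` is replaced by
`max{f(y) | y ⋗ e in P̂} + min{f(y) | y ⋖ e in P̂} - f(e)`. -/
noncomputable def tPL (e : P) (f : P → ℝ) : P → ℝ :=
  Function.update f e
    (sSup {v : ℝ | ∃ y : PHat P, toHat e ⋖ y ∧ v = hatOR f y}
      + sInf {v : ℝ | ∃ y : PHat P, y ⋖ toHat e ∧ v = hatOR f y} - f e)

/-- The piecewise-linear antichain (chain polytope) toggle: the label of `e` is replaced
by `1 - max{ Σ g(y_i) | (y_1,…,y_k) a maximal chain of P containing e }`. -/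
noncomputable def tauPL (e : P) (g : P → ℝ) : P → ℝ :=
  Function.update g e (1 - sSup ((fun l => (l.map g).sum) '' maxChainsThru e))

/-- The indicator function of a subset. -/
noncomputable def ind (S : Set P) : P → ℝ := fun x => if x ∈ S then 1 else 0

def listComp {α : Type*} (fs : List (α → α)) : α → α := fs.foldr (· ∘ ·) id

/-- A list `l` is a linear extension of the subposet `S`. -/
def IsLinExtListOn {P : Type*} [PartialOrder P] (S : Set P) (l : List P) : Prop :=
  l.Nodup ∧ (∀ x : P, x ∈ l ↔ x ∈ S) ∧
    ∀ i j : Fin l.length, l.get i < l.get j → (i : ℕ) < (j : ℕ)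

section Hat

lemma toHat_covBy_toHat_iff {a b : P} : toHat a ⋖ toHat b ↔ a ⋖ b := by
  simp [toHat]

lemma bot_covBy_toHat_iff {e : P} : (⊥ : PHat P) ⋖ toHat e ↔ IsMin e := by
  rw [toHat, WithBot.bot_covBy_coe]
  simp [IsMin]

lemma covBy_toHat_iff {y : PHat P} {e : P} :
    y ⋖ toHat e ↔ (y = ⊥ ∧ IsMin e) ∨ ∃ a, y = toHat a ∧ a ⋖ e := by
  induction y using WithBot.recBotCoe with
  | bot => rw [bot_covBy_toHat_iff]; simp [toHat]
  | coe w =>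
    induction w using WithTop.recTopCoe with
    | top => simp [toHat, CovBy]
    | coe a => rw [← toHat, toHat_covBy_toHat_iff]; simp [toHat]

@[simp] lemma hatOP_bot {α : Type*} (f : α → ℝ) : hatOP f ⊥ = 0 := rfl

@[simp] lemma hatOP_toHat {α : Type*} (f : α → ℝ) (a : α) : hatOP f (toHat a) = f a := rfl

end Hat

section Chains

lemma pairwise_lt_of_isChain_covBy {l : List P} (h : l.IsChain (· ⋖ ·)) : l.Pairwise (· < ·) :=
  List.isChain_iff_pairwise.mp (h.imp fun _ _ => CovBy.lt)

lemma finite_isChain_covBy [Finite P] : {l : List P | l.IsChain (· ⋖ ·)}.Finite :=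
  (List.finite_length_le P (Nat.card P)).subset fun _ hl =>
    List.Nodup.length_le_natCard ((pairwise_lt_of_isChain_covBy hl).imp ne_of_lt)

-- Restated with `IsChain`: the definitions use the deprecated alias `Chain'`, opaque to `simp`.
lemma mem_maxChainsTo_iff {x : P} {l : List P} :
    l ∈ maxChainsTo x ↔
      l.IsChain (· ⋖ ·) ∧ (∃ a, l.head? = some a ∧ IsMin a) ∧ l.getLast? = some x :=
  Iff.rfl

lemma mem_maxChainsFrom_iff {x : P} {l : List P} :
    l ∈ maxChainsFrom x ↔
      l.IsChain (· ⋖ ·) ∧ l.head? = some x ∧ ∃ z, l.getLast? = some z ∧ IsMax z :=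
  Iff.rfl

lemma mem_maxChainsThru_iff {e : P} {l : List P} :
    l ∈ maxChainsThru e ↔ l.IsChain (· ⋖ ·) ∧ (∃ a, l.head? = some a ∧ IsMin a) ∧
      (∃ z, l.getLast? = some z ∧ IsMax z) ∧ e ∈ l :=
  Iff.rfl

lemma exists_eq_append_singleton_of_mem_maxChainsTo {x : P} {l : List P}
    (hl : l ∈ maxChainsTo x) : ∃ s, l = s ++ [x] :=
  ⟨l.dropLast, (List.dropLast_append_getLast? x hl.2.2).symm⟩

lemma append_singleton_mem_maxChainsTo_iff {s : List P} {x : P} :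
    s ++ [x] ∈ maxChainsTo x ↔ (s = [] ∧ IsMin x) ∨ ∃ a, a ⋖ x ∧ s ∈ maxChainsTo a := by
  rcases List.eq_nil_or_concat s with rfl | ⟨s, a, rfl⟩
  · simp [mem_maxChainsTo_iff]
  · simp [mem_maxChainsTo_iff, List.isChain_append]
    tauto

lemma exists_eq_cons_of_mem_maxChainsFrom {x : P} {l : List P} (hl : l ∈ maxChainsFrom x) :
    ∃ t, l = x :: t :=
  List.head?_eq_some_iff.1 hl.2.1

lemma cons_mem_maxChainsFrom {x b : P} {t : List P} (hxb : x ⋖ b)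
    (ht : b :: t ∈ maxChainsFrom b) : x :: b :: t ∈ maxChainsFrom x := by
  simp_all [mem_maxChainsFrom_iff]

lemma maxChainsFrom_nonempty [Finite P] (x : P) : (maxChainsFrom x).Nonempty := by
  induction x using WellFoundedGT.induction with
  | ind x ih =>
    by_cases hmax : IsMax x
    · exact ⟨[x], by simp [mem_maxChainsFrom_iff, hmax]⟩
    · obtain ⟨b, hxb⟩ := exists_covBy_of_wellFoundedLT hmax
      obtain ⟨u, hu⟩ := ih b hxb.lt
      obtain ⟨t, rfl⟩ := exists_eq_cons_of_mem_maxChainsFrom hu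
      exact ⟨_, cons_mem_maxChainsFrom hxb hu⟩

lemma mem_maxChainsThru_iff_exists_split {e : P} {l : List P} :
    l ∈ maxChainsThru e ↔
      ∃ s t, l = s ++ e :: t ∧ s ++ [e] ∈ maxChainsTo e ∧ e :: t ∈ maxChainsFrom e := by
  have hhead (s t : List P) : (s ++ e :: t).head? = (s ++ [e]).head? := by
    simp [List.head?_append]
  have hlast (s t : List P) : (s ++ e :: t).getLast? = (e :: t).getLast? :=
    List.getLast?_append_of_ne_nil _ (List.cons_ne_nil e t)
  constructor
  · intro hl
    obtain ⟨hc, hmin, hmax, he⟩ := mem_maxChainsThru_iff.1 hl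
    obtain ⟨s, t, rfl⟩ := List.append_of_mem he
    rw [List.isChain_split] at hc
    rw [hhead] at hmin
    rw [hlast] at hmax
    exact ⟨s, t, rfl, ⟨hc.1, hmin, by simp⟩, ⟨hc.2, rfl, hmax⟩⟩
  · rintro ⟨s, t, rfl, ⟨hcs, hmin, -⟩, ⟨hct, -, hmax⟩⟩
    refine mem_maxChainsThru_iff.2 ⟨List.isChain_split.2 ⟨hcs, hct⟩, ?_, ?_, by simp⟩
    · rwa [hhead]
    · rwa [hlast]

end Chains

section Transfer

variable [Finite P]

lemma isGreatest_hatOP_covBy (f : P → ℝ) (x : P) :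
    IsGreatest {v : ℝ | ∃ y : PHat P, y ⋖ toHat x ∧ v = hatOP f y}
      (sSup {v : ℝ | ∃ y : PHat P, y ⋖ toHat x ∧ v = hatOP f y}) := by
  have hfin : {v : ℝ | ∃ y : PHat P, y ⋖ toHat x ∧ v = hatOP f y}.Finite :=
    (Set.finite_range (hatOP f)).subset fun _ ⟨y, _, hv⟩ => ⟨y, hv.symm⟩
  obtain ⟨y, hy⟩ :=
    exists_covBy_of_wellFoundedGT (not_isMin_of_lt (WithBot.bot_lt_coe _ : ⊥ < toHat x))
  have hne : {v : ℝ | ∃ y : PHat P, y ⋖ toHat x ∧ v = hatOP f y}.Nonempty := ⟨_, y, hy, rfl⟩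
  exact hfin.isCompact.isGreatest_sSup hne

lemma OPinv_le_sub_hatOP (f : P → ℝ) {x : P} {y : PHat P} (hy : y ⋖ toHat x) :
    OPinv f x ≤ f x - hatOP f y :=
  sub_le_sub_left ((isGreatest_hatOP_covBy f x).2 ⟨y, hy, rfl⟩) _

lemma exists_OPinv_eq_sub_hatOP (f : P → ℝ) (x : P) :
    ∃ y : PHat P, y ⋖ toHat x ∧ OPinv f x = f x - hatOP f y := by
  obtain ⟨y, hy, h⟩ := (isGreatest_hatOP_covBy f x).1
  exact ⟨y, hy, by rw [OPinv, h]⟩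

lemma isGreatest_sum_OPinv (f : P → ℝ) (x : P) :
    IsGreatest ((fun l => (l.map (OPinv f)).sum) '' maxChainsTo x) (f x) := by
  induction x using WellFoundedLT.induction with
  | ind x ih =>
    constructor
    · obtain ⟨y, hy, hOPinv⟩ := exists_OPinv_eq_sub_hatOP f x
      rcases covBy_toHat_iff.mp hy with ⟨rfl, hmin⟩ | ⟨a, rfl, hax⟩
      · refine ⟨[x], append_singleton_mem_maxChainsTo_iff.2 (.inl ⟨rfl, hmin⟩), ?_⟩
        simp [hOPinv]
      · obtain ⟨s, hs, hsum⟩ := (ih a hax.lt).1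
        refine ⟨s ++ [x], append_singleton_mem_maxChainsTo_iff.2 (.inr ⟨a, hax, hs⟩), ?_⟩
        simp only [List.map_append, List.sum_append, List.map_singleton, List.sum_singleton]
          at hsum ⊢
        rw [hsum, hOPinv, hatOP_toHat]
        ring
    · rintro _ ⟨l, hl, rfl⟩
      obtain ⟨s, rfl⟩ := exists_eq_append_singleton_of_mem_maxChainsTo hl
      rcases append_singleton_mem_maxChainsTo_iff.1 hl with ⟨rfl, hmin⟩ | ⟨a, hax, hs⟩
      · simpa using OPinv_le_sub_hatOP f (bot_covBy_toHat_iff.2 hmin)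
      · have hsum := (ih a hax.lt).2 ⟨s, hs, rfl⟩
        have hx := OPinv_le_sub_hatOP f (toHat_covBy_toHat_iff.2 hax)
        simp only [List.map_append, List.sum_append, List.map_singleton, List.sum_singleton]
        simp only [hatOP_toHat] at hx
        linarith

lemma isGreatest_sum_ORmap (g : P → ℝ) (x : P) :
    IsGreatest ((fun l => (l.map g).sum) '' maxChainsFrom x) (ORmap g x) :=
  ((finite_isChain_covBy.subset fun _ hl => hl.1).image _).isCompact.isGreatest_sSup
    ((maxChainsFrom_nonempty x).image _)

end Transfer

noncomputable def chainRowmotion (g : P → ℝ) : P → ℝ := OPinv fun x => 1 - ORmap g x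

section Toggle

lemma sum_map_append_cons_eq {s t : List P} {e : P} (hc : (s ++ e :: t).IsChain (· ⋖ ·))
    {g g' h : P → ℝ} (hlt : ∀ y < e, g' y = h y) (hge : ∀ y, e ≤ y → g' y = g y) :
    ((s ++ e :: t).map g').sum = (s.map h).sum + ((e :: t).map g).sum := by
  obtain ⟨-, hct, hst⟩ := List.pairwise_append.1 (pairwise_lt_of_isChain_covBy hc)
  have hup : ∀ y ∈ e :: t, e ≤ y := by
    intro y hy
    rcases List.mem_cons.1 hy with rfl | hy
    exacts [le_rfl, ((List.pairwise_cons.1 hct).1 y hy).le]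
  rw [List.map_append, List.sum_append]
  congr 2 <;> apply List.map_congr_left
  exacts [fun y hy => hlt y (hst y hy e List.mem_cons_self), fun y hy => hge y (hup y hy)]

variable [Finite P]

lemma isGreatest_sum_maxChainsThru (f g g' : P → ℝ) (e : P)
    (hlt : ∀ y < e, g' y = OPinv f y) (hge : ∀ y, e ≤ y → g' y = g y) :
    IsGreatest ((fun l => (l.map g').sum) '' maxChainsThru e) (f e - OPinv f e + ORmap g e) := by
  constructor
  · obtain ⟨l, hl, hsum⟩ := (isGreatest_sum_OPinv f e).1
    obtain ⟨s, rfl⟩ := exists_eq_append_singleton_of_mem_maxChainsTo hl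
    obtain ⟨u, hu, hsum'⟩ := (isGreatest_sum_ORmap g e).1
    obtain ⟨t, rfl⟩ := exists_eq_cons_of_mem_maxChainsFrom hu
    have hthru := mem_maxChainsThru_iff_exists_split.2 ⟨s, t, rfl, hl, hu⟩
    refine ⟨_, hthru, ?_⟩
    simp only [List.map_append, List.sum_append, List.map_singleton, List.sum_singleton] at hsum
    simp only at hsum' ⊢
    rw [sum_map_append_cons_eq hthru.1 hlt hge]
    linarith
  · rintro _ ⟨l, hl, rfl⟩
    obtain ⟨s, t, rfl, hs, ht⟩ := mem_maxChainsThru_iff_exists_split.1 hl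
    have hlow := (isGreatest_sum_OPinv f e).2 ⟨_, hs, rfl⟩
    have hup := (isGreatest_sum_ORmap g e).2 ⟨_, ht, rfl⟩
    simp only [List.map_append, List.sum_append, List.map_singleton, List.sum_singleton] at hlow
    simp only at hup ⊢
    rw [sum_map_append_cons_eq hl.1 hlt hge]
    linarith

lemma tauPL_eq_update_chainRowmotion (g g' : P → ℝ) (e : P)
    (hlt : ∀ y < e, g' y = chainRowmotion g y) (hge : ∀ y, e ≤ y → g' y = g y) :
    tauPL e g' = Function.update g' e (chainRowmotion g e) := by
  rw [tauPL, (isGreatest_sum_maxChainsThru _ g g' e hlt hge).csSup_eq, chainRowmotion]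
  ring_nf

lemma tauPL_piecewise_chainRowmotion (g : P → ℝ) {S : Set P} {e : P}
    (hbelow : ∀ y < e, y ∈ S) (habove : ∀ y, e ≤ y → y ∉ S) :
    tauPL e (S.piecewise (chainRowmotion g) g) = (insert e S).piecewise (chainRowmotion g) g := by
  rw [Set.piecewise_insert]
  exact tauPL_eq_update_chainRowmotion g _ e (fun y hy => S.piecewise_eq_of_mem _ _ (hbelow y hy))
    fun y hy => S.piecewise_eq_of_notMem _ _ (habove y hy)

/-- The hypotheses say that `xs` is a linear extension of a down-set of `P`. -/
lemma listComp_reverse_map_tauPL (g : P → ℝ) {xs : List P} (hnd : xs.Nodup)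
    (hext : xs.Pairwise fun a b => ¬ b < a) (hdown : ∀ x ∈ xs, ∀ y < x, y ∈ xs) :
    listComp (xs.reverse.map tauPL) g = {y | y ∈ xs}.piecewise (chainRowmotion g) g := by
  induction xs using List.reverseRecOn with
  | nil => ext; simp [listComp]
  | append_singleton ys e ih =>
    obtain ⟨hext, -, hlast⟩ := List.pairwise_append.1 hext
    have he : e ∉ ys := fun h =>
      (List.nodup_append.1 hnd).2.2 e h e (List.mem_singleton_self e) rfl
    have hdown' : ∀ x ∈ ys, ∀ y < x, y ∈ ys := by
      intro x hx y hy
      rcases List.mem_append.1 (hdown x (List.mem_append_left _ hx) y hy) with h | h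
      · exact h
      · exact absurd (List.mem_singleton.1 h ▸ hy) (hlast x hx e (List.mem_singleton_self e))
    have hbelow : ∀ y < e, y ∈ {y | y ∈ ys} := by
      intro y hy
      simpa [hy.ne] using hdown e (List.mem_append_right _ (List.mem_singleton_self e)) y hy
    have habove : ∀ y, e ≤ y → y ∉ {y | y ∈ ys} := by
      rintro y hy hys
      rcases hy.eq_or_lt with rfl | hlt
      exacts [he hys, hlast y hys e (List.mem_singleton_self e) hlt]
    have hstep : listComp ((ys ++ [e]).reverse.map tauPL) g
        = tauPL e (listComp (ys.reverse.map tauPL) g) := by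
      simp [listComp]
    rw [hstep, ih hnd.of_append_left hext hdown']
    convert tauPL_piecewise_chainRowmotion g hbelow habove using 3
    ext
    simp [or_comm]

end Toggle

/-- Chain polytope rowmotion `Row_C = OP⁻¹ ∘ comp ∘ OR` is the composition
`τ_{x_n} ∘ ⋯ ∘ τ_{x_2} ∘ τ_{x_1}` of the chain polytope toggles in the reverse order of
any linear extension `(x_1, …, x_n)` of `P` (so `τ_{x_1}` is applied first). -/
theorem chain_polytope_rowmotion_eq_comp_toggles
    (P : Type*) [PartialOrder P] [Fintype P]
    (l : List P) (hl : IsLinExtListOn Set.univ l) :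
    ∀ g : P → ℝ, InChainPolytope P g →
      OPinv (fun x => 1 - ORmap g x) = listComp (l.reverse.map tauPL) g := by
  intro g _
  obtain ⟨hnd, hmem, hord⟩ := hl
  have hext : l.Pairwise fun a b => ¬ b < a :=
    List.pairwise_iff_get.2 fun i j hij hji => (hord j i hji).not_gt hij
  have hall : ∀ y, y ∈ l := fun y => (hmem y).2 trivial
  rw [listComp_reverse_map_tauPL g hnd hext fun _ _ y _ => hall y]
  ext y
  exact (Set.piecewise_eq_of_mem {y | y ∈ l} (chainRowmotion g) g (hall y)).symm
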